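/- arXiv:2104.05299 — 5 statements merged into one kernel-verified Lean document; each statement's English description precedes it below -/
import Mathlib

section
/- Let Γ be a simple graph on n vertices with m edges satisfying: for any two adjacent vertices u and v there exists a third vertex w adjacent to neither u nor v. Then the Wiener index of the complement of Γ equals C(n,2) + m, i.e., the sum of distances over all unordered pairs of distinct vertices in the complement is n(n-1)/2 + m. -/
/-- The sum of distances over ordered pairs of distinct vertices equals twice the
Wiener index, so the Wiener index of the complement equals `C(n,2) + m`. -/
theorem stmt_2 {V : Type*} [Fintype V] [DecidableEq V] (Γ : SimpleGraph V)
    [DecidableRel Γ.Adj]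
    (hstar : ∀ u v : V, Γ.Adj u v →
      ∃ w : V, w ≠ u ∧ w ≠ v ∧ ¬ Γ.Adj w u ∧ ¬ Γ.Adj w v) :
    ∑ p ∈ Finset.univ.offDiag, Γᶜ.dist p.1 p.2
      = 2 * (Nat.choose (Fintype.card V) 2 + Γ.edgeFinset.card) := by
  have key : ∀ p ∈ Finset.univ.offDiag, Γᶜ.dist p.1 p.2
      = (if Γ.Adj p.1 p.2 then 2 else 1) := by
    rintro ⟨u, v⟩ hp
    simp only [Finset.mem_offDiag] at hp
    obtain ⟨-, -, hne⟩ := hp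
    by_cases hadj : Γ.Adj u v
    · simp only [hadj, if_true]
      obtain ⟨w, hwu, hwv, h1, h2⟩ := hstar u v hadj
      have a1 : Γᶜ.Adj u w := ⟨fun h => hwu h.symm, fun h => h1 h.symm⟩
      have a2 : Γᶜ.Adj w v := ⟨hwv, h2⟩
      have hle : Γᶜ.dist u v ≤ 2 := by
        have := SimpleGraph.dist_le
          (SimpleGraph.Walk.cons a1 (SimpleGraph.Walk.cons a2 SimpleGraph.Walk.nil))
        simpa using this
      have hne1 : Γᶜ.dist u v ≠ 1 := fun h =>
        (SimpleGraph.dist_eq_one_iff_adj.mp h).2 hadj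
      have hpos : 0 < Γᶜ.dist u v :=
        ((SimpleGraph.Walk.cons a1 (SimpleGraph.Walk.cons a2
          SimpleGraph.Walk.nil)).reachable).pos_dist_of_ne hne
      omega
    · have : Γᶜ.Adj u v := ⟨hne, hadj⟩
      simp [hadj, SimpleGraph.dist_eq_one_iff_adj.mpr this]
  rw [Finset.sum_congr rfl key]
  have split : ∀ p : V × V, (if Γ.Adj p.1 p.2 then 2 else 1)
      = 1 + (if Γ.Adj p.1 p.2 then 1 else 0) := by
    intro p; split <;> rfl
  simp only [split]
  rw [Finset.sum_add_distrib, Finset.sum_const, smul_eq_mul, mul_one,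
    ← Finset.sum_filter]
  have hfil : Finset.univ.offDiag.filter (fun p : V × V => Γ.Adj p.1 p.2)
      = Finset.univ.filter (fun p : V × V => Γ.Adj p.1 p.2) := by
    apply Finset.ext
    rintro ⟨u, v⟩
    simp only [Finset.mem_filter, Finset.mem_offDiag, Finset.mem_univ, true_and]
    exact ⟨fun h => h.2, fun h => ⟨h.ne, h⟩⟩
  rw [hfil, Finset.sum_const, smul_eq_mul, mul_one, ← SimpleGraph.two_mul_card_edgeFinset]
  have hcard : (Finset.univ : Finset V).offDiag.card = Fintype.card V * Fintype.card V - Fintype.card V := by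
    rw [Finset.offDiag_card]; rfl
  have hch : 2 * Nat.choose (Fintype.card V) 2
      = Fintype.card V * Fintype.card V - Fintype.card V := by
    rw [Nat.choose_two_right, Nat.mul_div_cancel' (Nat.even_mul_pred_self _).two_dvd,
      Nat.mul_sub, mul_one]
  rw [hcard]
  omega
end

section
/- Let n ≥ 8 and 2 ≤ a < n/2, with (n,a) ≠ (8,3). In the complement of the circulant graph C_n(1,a), the distance from vertex 0 to a vertex v is 0 if v = 0, is 2 if v ∈ {1, a, n−a, n−1}, and is 1 otherwise. -/
private lemma myCastInj {n : ℕ} (hn : 0 < n) {x y : ℕ} (hx : x < n) (hy : y < n)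
    (h : (x : ZMod n) = y) : x = y := by
  haveI : NeZero n := ⟨hn.ne'⟩
  have := congrArg ZMod.val h
  rwa [ZMod.val_natCast_of_lt hx, ZMod.val_natCast_of_lt hy] at this

private lemma myAdjIff {n a : ℕ} (x y : ZMod n) :
    (SimpleGraph.circulantGraph ({1, (a : ZMod n)} : Set (ZMod n))).Adj x y ↔
      x ≠ y ∧ (x - y = 1 ∨ x - y = (a:ZMod n) ∨ y - x = 1 ∨ y - x = (a:ZMod n)) := by
  simp [SimpleGraph.circulantGraph, SimpleGraph.fromRel_adj]
  tauto

private lemma myNegCast {n : ℕ} (a : ℕ) (h : a ≤ n) :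
    -((a : ℕ) : ZMod n) = ((n - a : ℕ) : ZMod n) := by
  have : ((n - a : ℕ) : ZMod n) + a = ((n : ℕ) : ZMod n) := by
    rw [← Nat.cast_add]; congr 1; omega
  rw [ZMod.natCast_self] at this
  exact neg_eq_of_add_eq_zero_left this

private lemma myComplAdj {n a : ℕ} (hn : 8 ≤ n) (han : a < n) (p q : ℕ)
    (hp : p < n) (hq : q < p) (h1 : p - q ≠ 1) (h2 : p - q ≠ a)
    (h3 : p - q ≠ n - 1) (h4 : p - q ≠ n - a) :
    (SimpleGraph.circulantGraph ({1, (a : ZMod n)} : Set (ZMod n)))ᶜ.Adj (p : ZMod n) (q : ZMod n) := by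
  have hn0 : 0 < n := by omega
  have hne : (p : ZMod n) ≠ (q : ZMod n) := fun h => by
    have := myCastInj hn0 hp (by omega) h; omega
  refine ⟨hne, ?_⟩
  rw [myAdjIff]
  rintro ⟨-, hor⟩
  have hd : (p : ZMod n) - q = ((p - q : ℕ) : ZMod n) := by
    rw [Nat.cast_sub (le_of_lt hq)]
  have hd' : (q : ZMod n) - p = ((n - (p - q) : ℕ) : ZMod n) := by
    have : (q : ZMod n) - p = -((p : ZMod n) - q) := by ring
    rw [this, hd, myNegCast _ (by omega)]
  have h1' : (1 : ZMod n) = ((1 : ℕ) : ZMod n) := by norm_cast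
  rcases hor with h | h | h | h
  · rw [hd, h1'] at h
    have := myCastInj hn0 (by omega) (by omega) h
    omega
  · rw [hd] at h
    have := myCastInj hn0 (by omega) han h
    omega
  · rw [hd', h1'] at h
    have := myCastInj hn0 (by omega) (by omega) h
    omega
  · rw [hd'] at h
    have := myCastInj hn0 (by omega) han h
    omega

private lemma myDistTwo {V : Type*} (G : SimpleGraph V) {u v w : V}
    (h1 : Gᶜ.Adj u w) (h2 : Gᶜ.Adj w v) (h3 : G.Adj u v) : Gᶜ.dist u v = 2 := by
  have hle : Gᶜ.dist u v ≤ 2 := by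
    have := SimpleGraph.dist_le (SimpleGraph.Walk.cons h1 h2.toWalk)
    simpa using this
  have hpos : 0 < Gᶜ.dist u v :=
    SimpleGraph.Reachable.pos_dist_of_ne ⟨SimpleGraph.Walk.cons h1 h2.toWalk⟩ h3.ne
  have hone : Gᶜ.dist u v ≠ 1 := by
    rw [Ne, SimpleGraph.dist_eq_one_iff_adj]
    intro hadj
    exact ((SimpleGraph.compl_adj _ _ _).mp hadj).2 h3
  omega

theorem stmt_7 (n a : ℕ) (hn : 8 ≤ n) (ha : 2 ≤ a) (ha' : 2 * a < n)
    (hex : (n, a) ≠ (8, 3)) :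
    ∀ v : ZMod n,
      (SimpleGraph.circulantGraph ({1, (a : ZMod n)} : Set (ZMod n)))ᶜ.dist 0 v
        = if v = 0 then 0
          else if v = 1 ∨ v = (a : ZMod n) ∨ v = -(a : ZMod n) ∨ v = -1 then 2
          else 1 := by
  intro v
  have hn0 : 0 < n := by omega
  haveI : NeZero n := ⟨by omega⟩
  haveI : Fact (1 < n) := ⟨by omega⟩
  have h83 : ¬(n = 8 ∧ a = 3) := fun h => hex (by rw [h.1, h.2])
  have hna : a < n := by omega
  have hone : (1 : ZMod n) = ((1 : ℕ) : ZMod n) := by norm_cast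
  have hzero : (0 : ZMod n) = ((0 : ℕ) : ZMod n) := by norm_cast
  have hneg1 : (-1 : ZMod n) = ((n - 1 : ℕ) : ZMod n) := by
    rw [← myNegCast 1 (by omega), Nat.cast_one]
  have hnega : -((a : ℕ) : ZMod n) = ((n - a : ℕ) : ZMod n) := myNegCast a (by omega)
  by_cases h0 : v = 0
  · simp [h0]
  rw [if_neg h0]
  by_cases hv : v = 1 ∨ v = (a : ZMod n) ∨ v = -(a : ZMod n) ∨ v = -1
  · rw [if_pos hv]
    obtain ⟨w, hw⟩ : ∃ w : ℕ, 2 ≤ w ∧ w < n ∧ w ≠ 1 ∧ w ≠ a ∧ w ≠ n-1 ∧ w ≠ n-a ∧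
        w-1 ≠ 1 ∧ w-1 ≠ a ∧ w-1 ≠ n-1 ∧ w-1 ≠ n-a := by
      rcases Nat.lt_or_ge n (2*a+3) with h | h
      · by_cases hn2 : n = 2*a+1
        · exact ⟨a+3, by omega⟩
        · exact ⟨a+4, by omega⟩
      · exact ⟨a+2, by omega⟩
    obtain ⟨u, hu⟩ : ∃ u : ℕ, a < u ∧ u < n ∧ u ≠ 1 ∧ u ≠ a ∧ u ≠ n-1 ∧ u ≠ n-a ∧
        u-a ≠ 1 ∧ u-a ≠ a ∧ u-a ≠ n-1 ∧ u-a ≠ n-a := by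
      by_cases ha2 : a = 2
      · exact ⟨5, by omega⟩
      by_cases hn2 : n = 2*a+2
      · exact ⟨a+3, by omega⟩
      · exact ⟨a+2, by omega⟩
    rcases hv with hv | hv | hv | hv
    · rw [hv]
      refine myDistTwo (w := ((w : ℕ) : ZMod n)) _ ?_ ?_ ?_
      · have := (myComplAdj (a := a) hn hna w 0 (by omega) (by omega)
          (by omega) (by omega) (by omega) (by omega)).symm
        simpa using this
      · have := myComplAdj (a := a) hn hna w 1 (by omega) (by omega)
          (by omega) (by omega) (by omega) (by omega)
        simpa using this
      · refine (myAdjIff _ _).mpr ⟨zero_ne_one, Or.inr (Or.inr (Or.inl ?_))⟩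
        simp
    · rw [hv]
      refine myDistTwo (w := ((u : ℕ) : ZMod n)) _ ?_ ?_ ?_
      · have := (myComplAdj (a := a) hn hna u 0 (by omega) (by omega)
          (by omega) (by omega) (by omega) (by omega)).symm
        simpa using this
      · exact (myComplAdj (a := a) hn hna u a (by omega) (by omega)
          (by omega) (by omega) (by omega) (by omega))
      · refine (myAdjIff _ _).mpr ⟨?_, Or.inr (Or.inr (Or.inr ?_))⟩
        · intro h
          rw [hzero] at h
          have := myCastInj hn0 (by omega) hna h
          omega
        · simp
    · rw [hv, hnega]
      refine myDistTwo (w := (((n-u) : ℕ) : ZMod n)) _ ?_ ?_ ?_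
      · have := (myComplAdj (a := a) hn hna (n-u) 0 (by omega) (by omega)
          (by omega) (by omega) (by omega) (by omega)).symm
        simpa using this
      · exact (myComplAdj (a := a) hn hna (n-a) (n-u) (by omega) (by omega)
          (by omega) (by omega) (by omega) (by omega)).symm
      · refine (myAdjIff _ _).mpr ⟨?_, Or.inr (Or.inl ?_)⟩
        · intro h
          rw [hzero] at h
          have := myCastInj hn0 (by omega) (by omega) h
          omega
        · rw [← hnega]; ring
    · rw [hv, hneg1]
      refine myDistTwo (w := (((n-w) : ℕ) : ZMod n)) _ ?_ ?_ ?_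
      · have := (myComplAdj (a := a) hn hna (n-w) 0 (by omega) (by omega)
          (by omega) (by omega) (by omega) (by omega)).symm
        simpa using this
      · exact (myComplAdj (a := a) hn hna (n-1) (n-w) (by omega) (by omega)
          (by omega) (by omega) (by omega) (by omega)).symm
      · refine (myAdjIff _ _).mpr ⟨?_, Or.inl ?_⟩
        · intro h
          rw [hzero] at h
          have := myCastInj hn0 (by omega) (by omega) h
          omega
        · rw [← hneg1]; ring
  · rw [if_neg hv]
    push_neg at hv
    obtain ⟨hv1, hva, hvna, hvn1⟩ := hv
    rw [SimpleGraph.dist_eq_one_iff_adj, SimpleGraph.compl_adj]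
    refine ⟨fun h => h0 h.symm, ?_⟩
    rw [myAdjIff]
    rintro ⟨-, h | h | h | h⟩
    · exact hvn1 (by linear_combination -h)
    · exact hvna (by linear_combination -h)
    · exact hv1 (by rwa [sub_zero] at h)
    · exact hva (by rwa [sub_zero] at h)
end

section
/- Let n ≥ 9 and 2 ≤ a < n/2. The transmission of each vertex of the complement of the circulant graph C_n(1,a) equals n + 3. -/
open SimpleGraph Finset

/-- There is an element outside any finset of cardinality `< Fintype.card`. -/
lemma aux_exists_notMem {α : Type*} [Fintype α] [DecidableEq α] (s : Finset α)
    (h : s.card < Fintype.card α) : ∃ x, x ∉ s := by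
  have : (sᶜ : Finset α).Nonempty := by
    rw [← Finset.card_pos, Finset.card_compl]
    omega
  obtain ⟨x, hx⟩ := this
  exact ⟨x, Finset.mem_compl.mp hx⟩

lemma aux_dist_two {V : Type*} {G : SimpleGraph V} {u v w : V}
    (hne : u ≠ v) (hnadj : ¬ G.Adj u v) (h1 : G.Adj u w) (h2 : G.Adj w v) :
    G.dist u v = 2 := by
  have hle : G.dist u v ≤ 2 := by
    simpa using SimpleGraph.dist_le (SimpleGraph.Walk.cons h1 h2.toWalk)
  have hreach : G.Reachable u v := ⟨SimpleGraph.Walk.cons h1 h2.toWalk⟩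
  have hpos : 0 < G.dist u v := hreach.pos_dist_of_ne hne
  have hone : G.dist u v ≠ 1 := fun h => hnadj (SimpleGraph.dist_eq_one_iff_adj.mp h)
  omega

theorem stmt_12 (n a : ℕ) (hn : 9 ≤ n) (ha : 2 ≤ a) (ha' : 2 * a < n) [NeZero n] :
    ∀ u : ZMod n,
      ∑ v : ZMod n,
        (SimpleGraph.circulantGraph ({1, (a : ZMod n)} : Set (ZMod n)))ᶜ.dist u v
          = n + 3 := by
  intro u
  set G' := (SimpleGraph.circulantGraph ({1, (a : ZMod n)} : Set (ZMod n)))ᶜ with hG'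
  have hcard : Fintype.card (ZMod n) = n := ZMod.card n
  -- the "bad" differences
  set B : Finset (ZMod n) := {1, -1, (a : ZMod n), -(a : ZMod n)} with hB
  -- values
  have h1v : (1 : ZMod n).val = 1 := ZMod.val_one_eq_one_mod n ▸ by
    have : 1 % n = 1 := Nat.mod_eq_of_lt (by omega)
    simp [ZMod.val_one_eq_one_mod, this]
  have hneg : ∀ m : ℕ, m < n → (-(m : ZMod n)) = ((n - m : ℕ) : ZMod n) := by
    intro m hm
    have : ((m : ℕ) : ZMod n) + ((n - m : ℕ) : ZMod n) = ((n : ℕ) : ZMod n) := by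
      rw [← Nat.cast_add]; congr 1; omega
    rw [ZMod.natCast_self] at this
    linear_combination -this
  have hav : ((a : ℕ) : ZMod n).val = a := ZMod.val_cast_of_lt (by omega)
  have hnegav : (-(a : ZMod n)).val = n - a := by
    rw [hneg a (by omega)]; exact ZMod.val_cast_of_lt (by omega)
  have hneg1v : (-(1 : ZMod n)).val = n - 1 := by
    have h := hneg 1 (by omega)
    rw [Nat.cast_one] at h
    rw [h]; exact ZMod.val_cast_of_lt (by omega)
  -- distinctness of elements of B
  have hd12 : (1 : ZMod n) ≠ -1 := fun h => by
    have := h1v; rw [h, hneg1v] at this; omega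
  have hd13 : (1 : ZMod n) ≠ (a : ZMod n) := fun h => by
    have := h1v; rw [h, hav] at this; omega
  have hd14 : (1 : ZMod n) ≠ -(a : ZMod n) := fun h => by
    have := h1v; rw [h, hnegav] at this; omega
  have hd23 : (-1 : ZMod n) ≠ (a : ZMod n) := fun h => by
    have := hneg1v; rw [h, hav] at this; omega
  have hd24 : (-1 : ZMod n) ≠ -(a : ZMod n) := fun h => by
    have := hneg1v; rw [h, hnegav] at this; omega
  have hd34 : ((a : ℕ) : ZMod n) ≠ -(a : ZMod n) := fun h => by
    have := hav; rw [h, hnegav] at this; omega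
  have h0B : (0 : ZMod n) ∉ B := by
    simp only [hB, Finset.mem_insert, Finset.mem_singleton]
    push_neg
    refine ⟨?_, ?_, ?_, ?_⟩ <;> intro h
    · exact absurd (h ▸ (ZMod.val_zero (n := n))) (by rw [h1v]; omega)
    · exact absurd (h ▸ (ZMod.val_zero (n := n))) (by rw [hneg1v]; omega)
    · exact absurd (h ▸ (ZMod.val_zero (n := n))) (by rw [hav]; omega)
    · exact absurd (h ▸ (ZMod.val_zero (n := n))) (by rw [hnegav]; omega)
  have hBcard : B.card = 4 := by
    rw [hB]
    rw [Finset.card_insert_of_notMem (by simp [hd12, hd13, hd14]),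
      Finset.card_insert_of_notMem (by simp [hd23, hd24]),
      Finset.card_insert_of_notMem (by simp [hd34]),
      Finset.card_singleton]
  -- adjacency in the complement
  have hadj : ∀ x y : ZMod n, G'.Adj x y ↔ x ≠ y ∧ y - x ∉ B := by
    intro x y
    rw [hG', SimpleGraph.compl_adj, SimpleGraph.circulantGraph_adj]
    constructor
    · rintro ⟨hxy, h⟩
      push_neg at h
      refine ⟨hxy, ?_⟩
      simp only [hB, Finset.mem_insert, Finset.mem_singleton]
      push_neg
      obtain ⟨h1, h2⟩ := h hxy
      simp only [Set.mem_insert_iff, Set.mem_singleton_iff] at h1 h2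
      push_neg at h1 h2
      refine ⟨h2.1, ?_, h2.2, ?_⟩
      · intro h; exact h1.1 (by linear_combination -h)
      · intro h; exact h1.2 (by linear_combination -h)
    · rintro ⟨hxy, h⟩
      simp only [hB, Finset.mem_insert, Finset.mem_singleton] at h
      push_neg at h
      refine ⟨hxy, ?_⟩
      rintro ⟨-, (h'|h')⟩ <;> simp only [Set.mem_insert_iff, Set.mem_singleton_iff] at h'
      · rcases h' with h' | h'
        · exact h.2.1 (by linear_combination -h')
        · exact h.2.2.2 (by linear_combination -h')
      · rcases h' with h' | h'
        · exact h.1 h'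
        · exact h.2.2.1 h'
  -- distance function
  have hdist : ∀ d : ZMod n,
      G'.dist u (u + d) = if d = 0 then 0 else if d ∈ B then 2 else 1 := by
    intro d
    by_cases hd0 : d = 0
    · simp [hd0, SimpleGraph.dist_self]
    · by_cases hdB : d ∈ B
      · simp only [hd0, hdB, if_false, if_true]
        -- find a witness for a path of length two
        set S : Finset (ZMod n) := B ∪ B.image (fun x => d - x) with hS
        have hScard : S.card < Fintype.card (ZMod n) := by
          have h1 : S.card ≤ B.card + (B.image (fun x => d - x)).card :=
            Finset.card_union_le _ _
          have h2 : (B.image (fun x => d - x)).card ≤ B.card :=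
            Finset.card_image_le
          rw [hcard]
          omega
        obtain ⟨e, he⟩ := aux_exists_notMem S hScard
        have heB : e ∉ B := fun h => he (Finset.mem_union_left _ h)
        have heI : ∀ x ∈ B, d - x ≠ e := by
          intro x hx hex
          exact he (Finset.mem_union_right _ (Finset.mem_image.mpr ⟨x, hx, hex⟩))
        have he0 : e ≠ 0 := by
          intro h; exact heI d hdB (by rw [h, sub_self])
        have hed : e ≠ d := fun h => heB (h ▸ hdB)
        have hdeB : d - e ∉ B := by
          intro h
          exact heI (d - e) h (by ring)
        apply aux_dist_two (w := u + e)
        · intro h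
          exact hd0 (by linear_combination -h)
        · rw [hadj]
          push_neg
          intro _
          simpa using hdB
        · rw [hadj]
          constructor
          · intro h; exact he0 (by linear_combination -h)
          · simpa using heB
        · rw [hadj]
          constructor
          · intro h; exact hed (by linear_combination h)
          · have : u + d - (u + e) = d - e := by ring
            rw [this]; exact hdeB
      · simp only [hd0, hdB, if_false]
        rw [SimpleGraph.dist_eq_one_iff_adj, hadj]
        constructor
        · intro h; exact hd0 (by linear_combination -h)
        · simpa using hdB
  -- compute the sum
  calc ∑ v : ZMod n, G'.dist u v
      = ∑ d : ZMod n, G'.dist u (u + d) := (Equiv.sum_comp (Equiv.addLeft u) (G'.dist u)).symm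
    _ = ∑ d : ZMod n, (if d = 0 then 0 else if d ∈ B then 2 else 1) := by
        exact Finset.sum_congr rfl fun d _ => hdist d
    _ = n + 3 := by
        have key : ∑ d : ZMod n, ((if d = 0 then 0 else if d ∈ B then 2 else 1)
            + (if d = 0 then 1 else 0))
            = ∑ d : ZMod n, (1 + if d ∈ B then 1 else 0) := by
          apply Finset.sum_congr rfl
          intro d _
          by_cases hd0 : d = 0
          · simp [hd0, h0B]
          · by_cases hdB : d ∈ B <;> simp [hd0, hdB]
        rw [Finset.sum_add_distrib] at key
        rw [Finset.sum_ite_eq' Finset.univ (0 : ZMod n) (fun _ => 1)] at key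
        simp only [Finset.mem_univ, if_true] at key
        rw [Finset.sum_add_distrib, Finset.sum_const, Finset.sum_boole] at key
        simp only [Finset.card_univ, hcard, smul_eq_mul, mul_one] at key
        have : (Finset.univ.filter (fun d => d ∈ B)).card = B.card := by
          congr 1
          ext x
          simp
        rw [this, hBcard] at key
        norm_num at key
        omega
end

section
/- Let n ≥ 9 and 2 ≤ a < n/2. The Wiener index of the complement of C_n(1,a) equals n(n+3)/2. -/
open SimpleGraph Finset in
/-- The sum of distances over ordered pairs is twice the Wiener index, so the
Wiener index of the complement of `C_n(1,a)` equals `n(n+3)/2`. -/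
theorem stmt_17 (n a : ℕ) (hn : 9 ≤ n) (ha : 2 ≤ a) (ha' : 2 * a < n) [NeZero n] :
    ∑ p ∈ (Finset.univ : Finset (ZMod n)).offDiag,
        (SimpleGraph.circulantGraph ({1, (a : ZMod n)} : Set (ZMod n)))ᶜ.dist p.1 p.2
      = n * (n + 3) := by
  classical
  set G := SimpleGraph.circulantGraph ({1, (a : ZMod n)} : Set (ZMod n)) with hGdef
  -- cast injectivity
  have key : ∀ i j : ℕ, i < n → j < n → (i : ZMod n) = (j : ZMod n) → i = j := by
    intro i j hi hj h
    have := congrArg ZMod.val h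
    rwa [ZMod.val_cast_of_lt hi, ZMod.val_cast_of_lt hj] at this
  have hneg1 : (-1 : ZMod n) = ((n - 1 : ℕ) : ZMod n) := by
    have h1 : ((n : ℕ) : ZMod n) = 0 := ZMod.natCast_self n
    rw [Nat.cast_sub (by omega), h1, Nat.cast_one, zero_sub]
  have hnega : (-(a : ℕ) : ZMod n) = ((n - a : ℕ) : ZMod n) := by
    have h1 : ((n : ℕ) : ZMod n) = 0 := ZMod.natCast_self n
    rw [Nat.cast_sub (by omega), h1, zero_sub]
  have ne10 : (1 : ZMod n) ≠ 0 := by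
    intro h
    have := key 1 0 (by omega) (by omega) (by exact_mod_cast h)
    omega
  have nea1 : (a : ZMod n) ≠ 1 := by
    intro h
    have := key a 1 (by omega) (by omega) (by exact_mod_cast h)
    omega
  have nean1 : (a : ZMod n) ≠ -1 := by
    intro h
    rw [hneg1] at h
    have := key a (n-1) (by omega) (by omega) h
    omega
  have ne1neg1 : (1 : ZMod n) ≠ -1 := by
    intro h
    rw [hneg1] at h
    have := key 1 (n-1) (by omega) (by omega) (by exact_mod_cast h)
    omega
  have neaneg : (a : ZMod n) ≠ -(a : ZMod n) := by
    intro h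
    rw [hnega] at h
    have := key a (n-a) (by omega) (by omega) h
    omega
  have ne1nega : (1 : ZMod n) ≠ -(a : ZMod n) := by
    intro h
    rw [hnega] at h
    have := key 1 (n-a) (by omega) (by omega) (by exact_mod_cast h)
    omega
  have nea0 : (a : ZMod n) ≠ 0 := by
    intro h
    have := key a 0 (by omega) (by omega) (by exact_mod_cast h)
    omega
  -- adjacency characterization
  have adj_iff : ∀ x y : ZMod n, G.Adj x y ↔
      (y = x + 1 ∨ y = x - 1 ∨ y = x + a ∨ y = x - a) := by
    intro x y
    rw [hGdef]
    simp only [SimpleGraph.circulantGraph_adj, Set.mem_insert_iff, Set.mem_singleton_iff]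
    constructor
    · rintro ⟨hne, (h | h) | (h | h)⟩
      · exact Or.inr (Or.inl (by rw [← h]; ring))
      · exact Or.inr (Or.inr (Or.inr (by rw [← h]; ring)))
      · exact Or.inl (by rw [← h]; ring)
      · exact Or.inr (Or.inr (Or.inl (by rw [← h]; ring)))
    · rintro (rfl | rfl | rfl | rfl)
      · exact ⟨fun h => ne10 (by linear_combination -h), Or.inr (Or.inl (by ring))⟩
      · exact ⟨fun h => ne10 (by linear_combination h), Or.inl (Or.inl (by ring))⟩
      · refine ⟨fun h => ?_, Or.inr (Or.inr (by ring))⟩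
        have : (a : ZMod n) = 0 := by linear_combination -h
        exact nea0 this
      · refine ⟨fun h => ?_, Or.inl (Or.inr (by ring))⟩
        have : (a : ZMod n) = 0 := by linear_combination h
        exact nea0 this
  -- the distance in the complement
  have hdist : ∀ x y : ZMod n, x ≠ y →
      Gᶜ.dist x y = if G.Adj x y then 2 else 1 := by
    intro x y hxy
    by_cases hadj : G.Adj x y
    · rw [if_pos hadj]
      set B : Finset (ZMod n) := {x+1, x-1, x+(a:ZMod n), x-(a:ZMod n),
        y+1, y-1, y+(a:ZMod n), y-(a:ZMod n)} with hB
      have hBcard : B.card ≤ 8 := by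
        refine (Finset.card_insert_le _ _).trans (Nat.succ_le_succ ?_)
        refine (Finset.card_insert_le _ _).trans (Nat.succ_le_succ ?_)
        refine (Finset.card_insert_le _ _).trans (Nat.succ_le_succ ?_)
        refine (Finset.card_insert_le _ _).trans (Nat.succ_le_succ ?_)
        refine (Finset.card_insert_le _ _).trans (Nat.succ_le_succ ?_)
        refine (Finset.card_insert_le _ _).trans (Nat.succ_le_succ ?_)
        refine (Finset.card_insert_le _ _).trans (Nat.succ_le_succ ?_)
        simp
      have hzex : ∃ z : ZMod n, z ∉ B := by
        by_contra hc
        push_neg at hc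
        have : (Finset.univ : Finset (ZMod n)) ⊆ B := fun z _ => hc z
        have := Finset.card_le_card this
        rw [Finset.card_univ, ZMod.card] at this
        omega
      obtain ⟨z, hz⟩ := hzex
      have hxB : x ∈ B := by
        rcases (adj_iff x y).mp hadj with h | h | h | h <;> subst h <;> simp [hB]
      have hyB : y ∈ B := by
        rcases (adj_iff x y).mp hadj with h | h | h | h <;> subst h <;> simp [hB]
      have hzx : z ≠ x := fun h => hz (h ▸ hxB)
      have hzy : z ≠ y := fun h => hz (h ▸ hyB)
      have hnxz : ¬ G.Adj x z := by
        intro hA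
        rcases (adj_iff x z).mp hA with h | h | h | h <;> subst h <;> exact hz (by simp [hB])
      have hnzy : ¬ G.Adj z y := by
        intro hA
        rcases (adj_iff y z).mp hA.symm with h | h | h | h <;> subst h <;> exact hz (by simp [hB])
      have e1 : Gᶜ.Adj x z := (G.compl_adj x z).mpr ⟨hzx.symm, hnxz⟩
      have e2 : Gᶜ.Adj z y := (G.compl_adj z y).mpr ⟨hzy, hnzy⟩
      have hle : Gᶜ.dist x y ≤ 2 :=
        SimpleGraph.dist_le
          (SimpleGraph.Walk.cons e1 (SimpleGraph.Walk.cons e2 SimpleGraph.Walk.nil))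
      have hreach : Gᶜ.Reachable x y :=
        ⟨SimpleGraph.Walk.cons e1 (SimpleGraph.Walk.cons e2 SimpleGraph.Walk.nil)⟩
      have hne1 : Gᶜ.dist x y ≠ 1 := fun h =>
        ((G.compl_adj x y).mp (SimpleGraph.dist_eq_one_iff_adj.mp h)).2 hadj
      have hne0 : Gᶜ.dist x y ≠ 0 := fun h => hxy (hreach.dist_eq_zero_iff.mp h)
      omega
    · rw [if_neg hadj]
      exact SimpleGraph.dist_eq_one_iff_adj.mpr ((G.compl_adj x y).mpr ⟨hxy, hadj⟩)
  -- rewrite the sum using the distance formula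
  have hsum1 : ∑ p ∈ (Finset.univ : Finset (ZMod n)).offDiag, Gᶜ.dist p.1 p.2
      = ∑ p ∈ (Finset.univ : Finset (ZMod n)).offDiag, (1 + if G.Adj p.1 p.2 then 1 else 0) := by
    refine Finset.sum_congr rfl fun p hp => ?_
    rw [hdist p.1 p.2 (Finset.mem_offDiag.mp hp).2.2]
    split_ifs <;> ring
  rw [hsum1, Finset.sum_add_distrib, Finset.sum_const, Finset.offDiag_card,
    Finset.card_univ, ZMod.card, smul_eq_mul, mul_one]
  have h2 : ∑ p ∈ (Finset.univ : Finset (ZMod n)).offDiag, (if G.Adj p.1 p.2 then 1 else 0)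
      = ∑ p ∈ (Finset.univ ×ˢ Finset.univ : Finset (ZMod n × ZMod n)),
          (if G.Adj p.1 p.2 then 1 else 0) := by
    refine Finset.sum_subset (fun p hp => ?_) (fun p hp hnp => ?_)
    · have h := Finset.mem_offDiag.mp hp
      exact Finset.mem_product.mpr ⟨h.1, h.2.1⟩
    · have hp' := Finset.mem_product.mp hp
      have heq : p.1 = p.2 := by
        by_contra hne
        exact hnp (Finset.mem_offDiag.mpr ⟨hp'.1, hp'.2, hne⟩)
      rw [heq, if_neg (G.irrefl)]
  have h3 : ∀ x : ZMod n, ∑ y : ZMod n, (if G.Adj x y then 1 else 0) = 4 := by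
    intro x
    have hfil : Finset.univ.filter (G.Adj x)
        = ({x+1, x-1, x+(a:ZMod n), x-(a:ZMod n)} : Finset (ZMod n)) := by
      ext y
      simp [adj_iff x y]
    have d12 : x+1 ≠ x-1 := fun h => ne1neg1 (by linear_combination h)
    have d13 : x+1 ≠ x+(a:ZMod n) := fun h => nea1 (by linear_combination -h)
    have d14 : x+1 ≠ x-(a:ZMod n) := fun h => ne1nega (by linear_combination h)
    have d23 : x-1 ≠ x+(a:ZMod n) := fun h => nean1 (by linear_combination -h)
    have d24 : x-1 ≠ x-(a:ZMod n) := fun h => nea1 (by linear_combination h)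
    have d34 : x+(a:ZMod n) ≠ x-(a:ZMod n) := fun h => neaneg (by linear_combination h)
    rw [← Finset.card_filter, hfil,
      Finset.card_insert_of_notMem (by simp [d12, d13, d14]),
      Finset.card_insert_of_notMem (by simp [d23, d24]),
      Finset.card_insert_of_notMem (by simp [d34]),
      Finset.card_singleton]
  rw [h2, Finset.sum_product]
  simp only [h3]
  rw [Finset.sum_const, Finset.card_univ, ZMod.card, smul_eq_mul]
  have hnn : n ≤ n * n := Nat.le_mul_of_pos_left _ (by omega)
  zify [hnn]
  ring
end

section
/- Let n ≥ 9 and 2 ≤ a < n/2. The Harary index of the complement of C_n(1,a), i.e., the sum over all unordered pairs of distinct vertices of the reciprocal of their distance in the complement, equals n(n−3)/2. -/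
open SimpleGraph Finset

section aux

variable {n a : ℕ} (hn : 9 ≤ n) (ha : 2 ≤ a) (ha' : 2 * a < n) [NeZero n]

lemma aux_ne_zero {m : ℕ} (h0 : 0 < m) (h1 : m < n) : ((m : ℕ) : ZMod n) ≠ 0 := by
  rw [Ne, ZMod.natCast_eq_zero_iff]
  intro h
  exact absurd (Nat.le_of_dvd h0 h) (not_le.2 h1)

lemma adj_iff (x y : ZMod n) :
    (circulantGraph ({1, (a : ZMod n)} : Set (ZMod n))).Adj x y ↔
      x ≠ y ∧ (x - y = 1 ∨ x - y = a ∨ y - x = 1 ∨ y - x = a) := by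
  simp [circulantGraph, fromRel_adj, Set.mem_insert_iff, Set.mem_singleton_iff]
  tauto

end aux

/-- The sum of reciprocal distances over ordered pairs is twice the Harary index,
so the Harary index of the complement of `C_n(1,a)` equals `n(n-3)/2`. -/
theorem stmt_18 (n a : ℕ) (hn : 9 ≤ n) (ha : 2 ≤ a) (ha' : 2 * a < n) [NeZero n] :
    ∑ p ∈ (Finset.univ : Finset (ZMod n)).offDiag,
        ((((SimpleGraph.circulantGraph ({1, (a : ZMod n)} : Set (ZMod n)))ᶜ.dist
            p.1 p.2 : ℕ) : ℚ))⁻¹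
      = (n : ℚ) * ((n : ℚ) - 3) := by
  classical
  set G := circulantGraph ({1, (a : ZMod n)} : Set (ZMod n)) with hG
  set b : ZMod n := (a : ZMod n) with hb
  -- distance lemmas
  have hdist1 : ∀ x y : ZMod n, x ≠ y → ¬ G.Adj x y → Gᶜ.dist x y = 1 := by
    intro x y hne hnadj
    exact dist_eq_one_iff_adj.mpr ⟨hne, hnadj⟩
  have hdist2 : ∀ x y : ZMod n, G.Adj x y → Gᶜ.dist x y = 2 := by
    intro x y hadj
    have hne : x ≠ y := hadj.ne
    -- forbidden set
    set F : Finset (ZMod n) :=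
      {x + 1, x - 1, x + b, x - b, y + 1, y - 1, y + b, y - b} with hF
    have hFcard : F.card ≤ 8 := by
      refine le_trans (Finset.card_insert_le _ _) ?_
      refine Nat.succ_le_succ ?_
      refine le_trans (Finset.card_insert_le _ _) ?_
      refine Nat.succ_le_succ ?_
      refine le_trans (Finset.card_insert_le _ _) ?_
      refine Nat.succ_le_succ ?_
      refine le_trans (Finset.card_insert_le _ _) ?_
      refine Nat.succ_le_succ ?_
      refine le_trans (Finset.card_insert_le _ _) ?_
      refine Nat.succ_le_succ ?_
      refine le_trans (Finset.card_insert_le _ _) ?_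
      refine Nat.succ_le_succ ?_
      refine le_trans (Finset.card_insert_le _ _) ?_
      refine Nat.succ_le_succ ?_
      simp
    obtain ⟨z, hz⟩ : ∃ z : ZMod n, z ∉ F := by
      by_contra h
      push_neg at h
      have : (Finset.univ : Finset (ZMod n)) ⊆ F := fun z _ => h z
      have := Finset.card_le_card this
      rw [Finset.card_univ, ZMod.card] at this
      omega
    have hxF : x ∈ F := by
      rcases (adj_iff x y).1 hadj with ⟨-, h | h | h | h⟩ <;> rw [hF] <;> simp
      · right; right; right; right; left
        linear_combination h
      · right; right; right; right; right; right; left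
        linear_combination h
      · right; right; right; right; right; left
        linear_combination -h
      · right; right; right; right; right; right; right
        linear_combination -h
    have hyF : y ∈ F := by
      rcases (adj_iff x y).1 hadj with ⟨-, h | h | h | h⟩ <;> rw [hF] <;> simp
      · right; left; linear_combination -h
      · right; right; right; left; linear_combination -h
      · left; linear_combination h
      · right; right; left; linear_combination h
    have hzmem : ∀ w : ZMod n, G.Adj w z → w = x ∨ w = y → False := by
      intro w hwz hw
      rcases (adj_iff w z).1 hwz with ⟨-, h | h | h | h⟩ <;>
        rcases hw with rfl | rfl <;> apply hz <;> rw [hF] <;> simp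
      · right; left; linear_combination -h
      · right; right; right; right; right; left; linear_combination -h
      · right; right; right; left; linear_combination -h
      · right; right; right; right; right; right; right; linear_combination -h
      · left; linear_combination h
      · right; right; right; right; left; linear_combination h
      · right; right; left; linear_combination h
      · right; right; right; right; right; right; left; linear_combination h
    have hxz : Gᶜ.Adj x z := by
      refine ⟨fun h => hz (h ▸ hxF), fun h => hzmem x h (Or.inl rfl)⟩
    have hzy : Gᶜ.Adj z y := by
      refine ⟨fun h => hz (h ▸ hyF), fun h => hzmem y h.symm (Or.inr rfl)⟩
    have hle : Gᶜ.dist x y ≤ 2 := by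
      have h := SimpleGraph.dist_le (hxz.toWalk.append hzy.toWalk)
      simpa using h
    have hpos : 0 < Gᶜ.dist x y :=
      Reachable.pos_dist_of_ne ⟨hxz.toWalk.append hzy.toWalk⟩ hne
    have hne1 : Gᶜ.dist x y ≠ 1 := by
      intro h
      exact (dist_eq_one_iff_adj.1 h).2 hadj
    omega
  -- counting adjacent pairs
  have h2n : (2 : ℕ) < n := by omega
  have han : a < n := by omega
  have hb1 : b ≠ 1 := by
    intro h
    have : ((a - 1 : ℕ) : ZMod n) = 0 := by
      push_cast [Nat.cast_sub (by omega : 1 ≤ a)]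
      rw [← hb, h]; ring
    exact aux_ne_zero (n := n) (by omega) (by omega) this
  have hbn1 : b ≠ -1 := by
    intro h
    have : ((a + 1 : ℕ) : ZMod n) = 0 := by
      push_cast
      rw [← hb, h]; ring
    exact aux_ne_zero (n := n) (by omega) (by omega) this
  have hbnb : b ≠ -b := by
    intro h
    have : ((2 * a : ℕ) : ZMod n) = 0 := by
      push_cast
      rw [← hb]
      linear_combination h
    exact aux_ne_zero (n := n) (by omega) (by omega) this
  have h1n1 : (1 : ZMod n) ≠ -1 := by
    intro h
    have : ((2 : ℕ) : ZMod n) = 0 := by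
      push_cast
      linear_combination h
    exact aux_ne_zero (n := n) (by omega) (by omega) this
  have hb0 : b ≠ 0 := by
    intro h
    exact aux_ne_zero (n := n) (by omega : 0 < a) han (hb ▸ h)
  have h10 : (1 : ZMod n) ≠ 0 := by
    intro h
    refine aux_ne_zero (n := n) one_pos (by omega) ?_
    push_cast
    exact h
  set D : Finset (ZMod n) := {1, -1, b, -b} with hD
  have hDcard : D.card = 4 := by
    rw [hD]
    have hm1 : (1 : ZMod n) ∉ ({-1, b, -b} : Finset (ZMod n)) := by
      simp only [Finset.mem_insert, Finset.mem_singleton]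
      push_neg
      exact ⟨h1n1, fun h => hb1 h.symm, fun h => hbn1 (by linear_combination h)⟩
    rw [Finset.card_insert_of_notMem hm1,
        Finset.card_insert_of_notMem (by
          simp only [Finset.mem_insert, Finset.mem_singleton]
          push_neg
          exact ⟨fun h => hbn1 h.symm, fun h => hb1 (by linear_combination h)⟩),
        Finset.card_insert_of_notMem (by simp [hbnb]),
        Finset.card_singleton]
  have hDne : ∀ d ∈ D, d ≠ 0 := by
    intro d hd
    rw [hD] at hd
    simp only [Finset.mem_insert, Finset.mem_singleton] at hd
    rcases hd with rfl | rfl | rfl | rfl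
    · exact h10
    · exact fun h => h10 (by linear_combination -h)
    · exact hb0
    · exact fun h => hb0 (by linear_combination -h)
  set A : Finset (ZMod n × ZMod n) :=
    (Finset.univ : Finset (ZMod n)).offDiag.filter (fun p => G.Adj p.1 p.2) with hA
  have hAcard : A.card = 4 * n := by
    have : A.card = ((Finset.univ : Finset (ZMod n)) ×ˢ D).card := by
      apply Finset.card_nbij' (fun p => (p.1, p.2 - p.1)) (fun q => (q.1, q.1 + q.2))
      · intro p hp
        rw [Finset.mem_coe, Finset.mem_filter] at hp
        obtain ⟨-, hadj⟩ := hp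
        rcases (adj_iff p.1 p.2).1 hadj with ⟨-, h | h | h | h⟩ <;>
          simp only [Finset.mem_coe, Finset.mem_product, Finset.mem_univ, true_and, hD,
            Finset.mem_insert, Finset.mem_singleton]
        · right; left; linear_combination -h
        · right; right; right; linear_combination -h
        · left; exact h
        · right; right; left; exact h
      · intro q hq
        rw [Finset.mem_coe, Finset.mem_product] at hq
        obtain ⟨-, hd⟩ := hq
        have hne : q.1 ≠ q.1 + q.2 := by
          intro h
          exact hDne q.2 hd (by linear_combination -h)
        rw [hA, Finset.mem_coe, Finset.mem_filter, Finset.mem_offDiag]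
        refine ⟨⟨Finset.mem_univ _, Finset.mem_univ _, hne⟩, ?_⟩
        rw [adj_iff]
        refine ⟨hne, ?_⟩
        rw [hD] at hd
        simp only [Finset.mem_insert, Finset.mem_singleton] at hd
        rcases hd with h | h | h | h
        · right; right; left; linear_combination h
        · left; linear_combination -h
        · right; right; right; linear_combination h
        · right; left; linear_combination -h
      · intro p hp; simp
      · intro q hq; simp
    rw [this, Finset.card_product, Finset.card_univ, ZMod.card, hDcard]
    ring
  -- split the sum
  rw [← Finset.sum_filter_add_sum_filter_not (Finset.univ : Finset (ZMod n)).offDiag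
    (fun p => G.Adj p.1 p.2)]
  have hsum1 : ∑ p ∈ A, (((Gᶜ.dist p.1 p.2 : ℕ) : ℚ))⁻¹ = (A.card : ℚ) * 2⁻¹ := by
    rw [Finset.sum_congr rfl (fun p hp => ?_), Finset.sum_const, nsmul_eq_mul]
    rw [hA, Finset.mem_filter] at hp
    rw [hdist2 p.1 p.2 hp.2]
    norm_num
  set B := (Finset.univ : Finset (ZMod n)).offDiag.filter (fun p => ¬ G.Adj p.1 p.2) with hB
  have hsum2 : ∑ p ∈ B, (((Gᶜ.dist p.1 p.2 : ℕ) : ℚ))⁻¹ = (B.card : ℚ) := by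
    rw [Finset.sum_congr rfl (fun p hp => ?_), Finset.sum_const, nsmul_eq_mul, mul_one]
    rw [hB, Finset.mem_filter, Finset.mem_offDiag] at hp
    rw [hdist1 p.1 p.2 hp.1.2.2 hp.2]
    norm_num
  have hcards : A.card + B.card = n * n - n := by
    rw [hA, hB, Finset.card_filter_add_card_filter_not, Finset.offDiag_card,
      Finset.card_univ, ZMod.card]
  have hBcard : (B.card : ℚ) = (n : ℚ) * n - n - 4 * n := by
    have h1 : A.card + B.card + n = n * n := by
      have : n ≤ n * n := Nat.le_mul_of_pos_left n (by omega)
      omega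
    have := congrArg (fun m : ℕ => (m : ℚ)) h1
    push_cast at this
    rw [hAcard] at hcards
    push_cast [hAcard] at this ⊢
    linarith
  rw [hsum1, hsum2, hBcard, hAcard]
  push_cast
  ring
end
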